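/- Let Z and S0 be closed subspaces of a complex Hilbert space H with S0 ∔ Z = H. For every orthogonal projection Q with range(Q) ∔ Z = H, the operators P_Z − P_{S0}, Q − P_Z and P_{S0} − P_Z are invertible, and the operator σ(Q) := P_Z(P_Z − P_{S0})^{-1} + Q(Q − P_Z)^{-1} P_{S0}(P_{S0} − P_Z)^{-1} is invertible, satisfies σ(Q)(Z) = Z and σ(Q)(S0) = range(Q). Moreover, the map Q ↦ σ(Q) is continuous on {Q orthogonal projection : range(Q) ∔ Z = H} with the operator-norm topology. (In particular, the action of Gl^Z = {G invertible : G(Z) = Z} on G^Z = {S closed : S ∔ Z = H} given by G·S = G(S) is transitive, and the orbit map G ↦ G(S0) admits a continuous global cross section.) -/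

import Mathlib

/-!
For idempotents `A, B` of a ring with `A - B` invertible, `A (A - B)⁻¹` is an idempotent with
`A (A - B)⁻¹ A = A` and `A (A - B)⁻¹ B = 0` (the oblique projection onto `range A` along
`range B`), and `B (B - A)⁻¹ = 1 - A (A - B)⁻¹`. Hence `σ(Q) = E + F` with
`E = P_Z (P_Z - P_{S₀})⁻¹` the projection onto `Z` along `S₀` and `F = Q (Q - P_Z)⁻¹` the
projection onto `range Q` along `Z`. Since `ker F = Z = range E`, `E + F` is invertible with
inverse `1 - E F`; it fixes `Z` pointwise and maps `S₀` onto `range Q`. All of this is ring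
algebra, and `σ` is continuous in `Q` because inversion is continuous on the units of `B(H)`.

The only analytic input is the invertibility of `P - R` for orthogonal projections with
complementary ranges: if `π` is the (bounded, by the open mapping theorem) projection onto
`range P` along `range R`, then `π + π* - 1` inverts `P - R`.
-/

section Ring
variable {R : Type*} [Ring R]

theorem inverse_mul_eq_mul_inverse_of_mul_eq {u X Y : R} (hu : IsUnit u) (h : X * u = u * Y) :
    Ring.inverse u * X = Y * Ring.inverse u := by
  obtain ⟨u, rfl⟩ := hu
  rw [Ring.inverse_unit]
  exact SemiconjBy.units_inv_symm_left h.symm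

theorem inverse_neg_of_isUnit {u : R} (hu : IsUnit u) : Ring.inverse (-u) = -Ring.inverse u := by
  obtain ⟨u, rfl⟩ := hu
  rw [← Units.val_neg, Ring.inverse_unit, Ring.inverse_unit]
  simp

theorem one_sub_mul_inverse_sub {P S : R} (hu : IsUnit (P - S)) :
    1 - P * Ring.inverse (P - S) = S * Ring.inverse (S - P) := by
  rw [← neg_sub P S, inverse_neg_of_isUnit hu, ← Ring.mul_inverse_cancel _ hu]
  noncomm_ring

namespace IsIdempotentElem
variable {P S T : R}

theorem mul_sub_eq_sub_mul_one_sub (hP : IsIdempotentElem P) (hS : IsIdempotentElem S) :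
    P * (P - S) = (P - S) * (1 - S) := by
  have h : P * (P - S) - (P - S) * (1 - S) = (P * P - P) - (S * S - S) := by noncomm_ring
  rwa [hP.eq, hS.eq, sub_self, sub_self, sub_zero, sub_eq_zero] at h

theorem inverse_sub_mul_left (hP : IsIdempotentElem P) (hS : IsIdempotentElem S)
    (hu : IsUnit (P - S)) :
    Ring.inverse (P - S) * P = (1 - S) * Ring.inverse (P - S) :=
  inverse_mul_eq_mul_inverse_of_mul_eq hu (hP.mul_sub_eq_sub_mul_one_sub hS)

theorem inverse_sub_mul_right (hP : IsIdempotentElem P) (hS : IsIdempotentElem S)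
    (hu : IsUnit (P - S)) :
    Ring.inverse (P - S) * S = (1 - P) * Ring.inverse (P - S) := by
  refine inverse_mul_eq_mul_inverse_of_mul_eq hu ?_
  have h := hS.mul_sub_eq_sub_mul_one_sub hP
  rwa [← neg_sub P S, mul_neg, neg_mul, neg_inj] at h

theorem mul_inverse_sub_mul_self (hP : IsIdempotentElem P) (hS : IsIdempotentElem S)
    (hu : IsUnit (P - S)) : P * Ring.inverse (P - S) * P = P := by
  have hP' : P * (1 - S) = P * (P - S) := by rw [mul_sub, mul_sub, hP.eq, mul_one]
  rw [mul_assoc, hP.inverse_sub_mul_left hS hu, ← mul_assoc, hP', mul_assoc,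
    Ring.mul_inverse_cancel _ hu, mul_one]

theorem mul_inverse_sub_mul_right (hP : IsIdempotentElem P) (hS : IsIdempotentElem S)
    (hu : IsUnit (P - S)) : P * Ring.inverse (P - S) * S = 0 := by
  rw [mul_assoc, hP.inverse_sub_mul_right hS hu, ← mul_assoc, hP.mul_one_sub_self, zero_mul]

theorem mul_inverse_sub_mul_mul_inverse_sub (hP : IsIdempotentElem P)
    (hS : IsIdempotentElem S) (hu : IsUnit (P - S)) :
    P * Ring.inverse (P - S) * (S * Ring.inverse (S - T)) = 0 := by
  rw [← mul_assoc, hP.mul_inverse_sub_mul_right hS hu, zero_mul]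

theorem mul_inverse_sub (hP : IsIdempotentElem P) (hS : IsIdempotentElem S)
    (hu : IsUnit (P - S)) : IsIdempotentElem (P * Ring.inverse (P - S)) := by
  rw [IsIdempotentElem, ← mul_assoc, hP.mul_inverse_sub_mul_self hS hu]

end IsIdempotentElem

theorem isUnit_add_of_mul_eq_zero {E F : R} (hE : IsIdempotentElem E) (hF : IsIdempotentElem F)
    (hFE : F * E = 0) (hEF : (1 - E) * (1 - F) = 0) : IsUnit (E + F) := by
  have hEF' : E * F = E + F - 1 := by
    rw [← sub_eq_zero, ← hEF]
    noncomm_ring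
  refine ⟨⟨E + F, 1 - E * F, ?_, ?_⟩, rfl⟩
  · rw [mul_sub, mul_one, add_mul, ← mul_assoc, ← mul_assoc, hE.eq, hFE, zero_mul, add_zero,
      hEF']
    abel
  · rw [sub_mul, one_mul, mul_add, mul_assoc, mul_assoc, hF.eq, hFE, mul_zero, zero_add, hEF']
    abel

noncomputable def crossSection (P S Q : R) : R :=
  P * Ring.inverse (P - S) + Q * Ring.inverse (Q - P) * S * Ring.inverse (S - P)

section crossSection
variable {P S Q : R}

theorem crossSection_eq_add (hP : IsIdempotentElem P) (hQ : IsIdempotentElem Q)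
    (hPS : IsUnit (P - S)) (hQP : IsUnit (Q - P)) :
    crossSection P S Q = P * Ring.inverse (P - S) + Q * Ring.inverse (Q - P) := by
  rw [crossSection, mul_assoc _ S, ← one_sub_mul_inverse_sub hPS, mul_sub, mul_one,
    hQ.mul_inverse_sub_mul_mul_inverse_sub hP hQP, sub_zero]

theorem isUnit_crossSection (hP : IsIdempotentElem P) (hS : IsIdempotentElem S)
    (hQ : IsIdempotentElem Q) (hPS : IsUnit (P - S)) (hQP : IsUnit (Q - P)) :
    IsUnit (crossSection P S Q) := by
  have hSP : IsUnit (S - P) := neg_sub P S ▸ hPS.neg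
  rw [crossSection_eq_add hP hQ hPS hQP]
  refine isUnit_add_of_mul_eq_zero (hP.mul_inverse_sub hS hPS) (hQ.mul_inverse_sub hP hQP)
    (hQ.mul_inverse_sub_mul_mul_inverse_sub hP hQP) ?_
  rw [one_sub_mul_inverse_sub hPS, one_sub_mul_inverse_sub hQP]
  exact hS.mul_inverse_sub_mul_mul_inverse_sub hP hSP

theorem crossSection_mul_fst (hP : IsIdempotentElem P) (hS : IsIdempotentElem S)
    (hQ : IsIdempotentElem Q) (hPS : IsUnit (P - S)) (hQP : IsUnit (Q - P)) :
    crossSection P S Q * P = P := by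
  rw [crossSection_eq_add hP hQ hPS hQP, add_mul, hP.mul_inverse_sub_mul_self hS hPS,
    hQ.mul_inverse_sub_mul_right hP hQP, add_zero]

theorem crossSection_mul_snd (hP : IsIdempotentElem P) (hS : IsIdempotentElem S)
    (hQ : IsIdempotentElem Q) (hPS : IsUnit (P - S)) (hQP : IsUnit (Q - P)) :
    crossSection P S Q * S = Q * (Ring.inverse (Q - P) * S) := by
  rw [crossSection_eq_add hP hQ hPS hQP, add_mul, hP.mul_inverse_sub_mul_right hS hPS, zero_add,
    mul_assoc]

theorem crossSection_mul_snd_mul (hP : IsIdempotentElem P) (hS : IsIdempotentElem S)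
    (hQ : IsIdempotentElem Q) (hPS : IsUnit (P - S)) (hQP : IsUnit (Q - P)) :
    crossSection P S Q * S * (Ring.inverse (S - P) * Q) = Q := by
  rw [mul_assoc, ← mul_assoc S, ← one_sub_mul_inverse_sub hPS, ← mul_assoc,
    crossSection_eq_add hP hQ hPS hQP, add_mul, mul_sub, mul_sub, mul_one, mul_one,
    (hP.mul_inverse_sub hS hPS).eq, hQ.mul_inverse_sub_mul_mul_inverse_sub hP hQP, sub_self,
    zero_add, sub_zero, hQ.mul_inverse_sub_mul_self hP hQP]

end crossSection

end Ring

theorem continuousAt_crossSection {R : Type*} [NormedRing R] [HasSummableGeomSeries R]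
    {P S Q : R} (hQP : IsUnit (Q - P)) : ContinuousAt (crossSection P S) Q := by
  have hinv : ContinuousAt Ring.inverse (Q - P) :=
    hQP.unit_spec ▸ NormedRing.inverse_continuousAt hQP.unit
  have hQinv : ContinuousAt (fun Q' => Ring.inverse (Q' - P)) Q :=
    hinv.comp (f := fun Q' => Q' - P) (continuousAt_id.sub continuousAt_const)
  exact continuousAt_const.add
    (((continuousAt_id.mul hQinv).mul continuousAt_const).mul continuousAt_const)

theorem isUnit_sub_of_projection {A : Type*} [Ring A] [StarRing A] {P R π : A}
    (hP : IsSelfAdjoint P) (hR : IsSelfAdjoint R) (hPπ : P * π = π) (hπP : π * P = P)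
    (hπR : π * R = 0) (hR1π : R * (1 - π) = 1 - π) : IsUnit (P - R) := by
  have hPπ' : P * star π = P := by simpa only [star_mul, hP.star_eq] using congrArg star hπP
  have hRπ' : R * star π = 0 := by
    simpa only [star_mul, hR.star_eq, star_zero] using congrArg star hπR
  have hRπ : R * π = R - 1 + π := by
    calc R * π = R - R * (1 - π) := by noncomm_ring
      _ = R - 1 + π := by rw [hR1π]; abel
  have hright : (P - R) * (π + star π - 1) = 1 := by
    rw [sub_mul, mul_sub, mul_sub, mul_add, mul_add, hPπ, hPπ', hRπ, hRπ', mul_one, mul_one]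
    abel
  have hsa : IsSelfAdjoint (π + star π - 1) := by
    simp [IsSelfAdjoint, star_sub, star_add, add_comm]
  refine ⟨⟨P - R, π + star π - 1, hright, ?_⟩, rfl⟩
  simpa only [star_mul, star_one, (hP.sub hR).star_eq, hsa.star_eq] using congrArg star hright

theorem LinearMap.map_range_eq_range_of_mul_eq {R M : Type*} [Semiring R] [AddCommMonoid M]
    [Module R M] {T A B : Module.End R M} (X Y : Module.End R M) (h₁ : T * A = B * X)
    (h₂ : T * A * Y = B) : Submodule.map T (LinearMap.range A) = LinearMap.range B := by
  rw [← LinearMap.range_comp, ← Module.End.mul_eq_comp]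
  refine le_antisymm ?_ ?_
  · rw [h₁]
    exact LinearMap.range_comp_le_range X B
  · conv_lhs => rw [← h₂]
    exact LinearMap.range_comp_le_range Y (T * A)

namespace ContinuousLinearMap

theorem map_range_eq_range_of_mul_eq {R M : Type*} [Semiring R] [TopologicalSpace M]
    [AddCommMonoid M] [Module R M] {T A B : M →L[R] M} (X Y : M →L[R] M) (h₁ : T * A = B * X)
    (h₂ : T * A * Y = B) :
    Submodule.map (T : M →ₗ[R] M) (LinearMap.range (A : M →ₗ[R] M)) =
      LinearMap.range (B : M →ₗ[R] M) :=
  LinearMap.map_range_eq_range_of_mul_eq (X : M →ₗ[R] M) Y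
    (by rw [← toLinearMap_mul, h₁, toLinearMap_mul])
    (by rw [← toLinearMap_mul, ← toLinearMap_mul, h₂])

end ContinuousLinearMap

open ContinuousLinearMap Submodule in
theorem IsStarProjection.isUnit_sub {𝕜 E : Type*} [RCLike 𝕜] [NormedAddCommGroup E]
    [InnerProductSpace 𝕜 E] [CompleteSpace E] {P R : E →L[𝕜] E} (hP : IsStarProjection P)
    (hR : IsStarProjection R)
    (h : IsCompl (LinearMap.range (P : E →ₗ[𝕜] E)) (LinearMap.range (R : E →ₗ[𝕜] E))) :
    IsUnit (P - R) := by
  have hc : IsTopCompl (LinearMap.range (P : E →ₗ[𝕜] E)) (LinearMap.range (R : E →ₗ[𝕜] E)) :=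
    h.isTopCompl_of_isClosed hP.isIdempotentElem.isTopCompl.isClosed
      hR.isIdempotentElem.isTopCompl.isClosed
  set π := (LinearMap.range (P : E →ₗ[𝕜] E)).projectionL _ hc
  refine isUnit_sub_of_projection (π := π) hP.isSelfAdjoint hR.isSelfAdjoint ?_ ?_ ?_ ?_ <;>
    ext x
  · exact (LinearMap.IsIdempotentElem.mem_range_iff hP.isIdempotentElem.toLinearMap).1
      (projectionL_apply_mem hc x)
  · exact projectionL_apply_left hc ⟨P x, x, rfl⟩
  · exact projectionL_apply_right hc ⟨R x, x, rfl⟩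
  · exact (LinearMap.IsIdempotentElem.mem_range_iff hR.isIdempotentElem.toLinearMap).1
      (sub_projection_mem h x)

def IsOrthProjection {H : Type*} [NormedAddCommGroup H] [InnerProductSpace ℂ H]
    [CompleteSpace H] (P : H →L[ℂ] H) : Prop :=
  P ∘L P = P ∧ IsSelfAdjoint P

noncomputable def orthProj {H : Type*} [NormedAddCommGroup H] [InnerProductSpace ℂ H]
    [CompleteSpace H] (S : Submodule ℂ H) (hS : IsClosed (S : Set H)) : H →L[ℂ] H :=
  haveI : CompleteSpace S := hS.completeSpace_coe
  S.subtypeL ∘L S.orthogonalProjectionOnto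

section OrthProj
variable {H : Type*} [NormedAddCommGroup H] [InnerProductSpace ℂ H] [CompleteSpace H]

theorem IsOrthProjection.isStarProjection {Q : H →L[ℂ] H} (hQ : IsOrthProjection Q) :
    IsStarProjection Q :=
  ⟨hQ.1, hQ.2⟩

theorem isStarProjection_orthProj (S : Submodule ℂ H) (hS : IsClosed (S : Set H)) :
    IsStarProjection (orthProj S hS) :=
  haveI : CompleteSpace S := hS.completeSpace_coe
  isStarProjection_starProjection

theorem range_orthProj (S : Submodule ℂ H) (hS : IsClosed (S : Set H)) :
    LinearMap.range (orthProj S hS : H →ₗ[ℂ] H) = S :=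
  haveI : CompleteSpace S := hS.completeSpace_coe
  S.range_starProjection

end OrthProj

noncomputable def sigmaOp {H : Type*} [NormedAddCommGroup H] [InnerProductSpace ℂ H]
    [CompleteSpace H] (Z S₀ : Submodule ℂ H)
    (hZ : IsClosed (Z : Set H)) (hS₀ : IsClosed (S₀ : Set H)) (Q : H →L[ℂ] H) :
    H →L[ℂ] H :=
  orthProj Z hZ * Ring.inverse (orthProj Z hZ - orthProj S₀ hS₀) +
    Q * Ring.inverse (Q - orthProj Z hZ) *
      orthProj S₀ hS₀ * Ring.inverse (orthProj S₀ hS₀ - orthProj Z hZ)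

theorem sigmaOp_eq_crossSection {H : Type*} [NormedAddCommGroup H] [InnerProductSpace ℂ H]
    [CompleteSpace H] (Z S₀ : Submodule ℂ H) (hZ : IsClosed (Z : Set H))
    (hS₀ : IsClosed (S₀ : Set H)) (Q : H →L[ℂ] H) :
    sigmaOp Z S₀ hZ hS₀ Q = crossSection (orthProj Z hZ) (orthProj S₀ hS₀) Q :=
  rfl

theorem sigma_cross_section {H : Type*} [NormedAddCommGroup H]
    [InnerProductSpace ℂ H] [CompleteSpace H]
    (Z S₀ : Submodule ℂ H) (hZ : IsClosed (Z : Set H)) (hS₀ : IsClosed (S₀ : Set H))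
    (h : IsCompl S₀ Z) :
    (∀ Q : H →L[ℂ] H, IsOrthProjection Q → IsCompl (LinearMap.range (Q : H →ₗ[ℂ] H)) Z →
      IsUnit (orthProj Z hZ - orthProj S₀ hS₀) ∧
      IsUnit (Q - orthProj Z hZ) ∧
      IsUnit (orthProj S₀ hS₀ - orthProj Z hZ) ∧
      IsUnit (sigmaOp Z S₀ hZ hS₀ Q) ∧
      Submodule.map (sigmaOp Z S₀ hZ hS₀ Q : H →ₗ[ℂ] H) Z = Z ∧
      Submodule.map (sigmaOp Z S₀ hZ hS₀ Q : H →ₗ[ℂ] H) S₀ = LinearMap.range (Q : H →ₗ[ℂ] H)) ∧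
    Continuous (fun Q : {Q : H →L[ℂ] H //
        IsOrthProjection Q ∧ IsCompl (LinearMap.range (Q : H →ₗ[ℂ] H)) Z} =>
      sigmaOp Z S₀ hZ hS₀ (Q : H →L[ℂ] H)) := by
  have hP := isStarProjection_orthProj Z hZ
  have hS := isStarProjection_orthProj S₀ hS₀
  have hPS : IsUnit (orthProj Z hZ - orthProj S₀ hS₀) :=
    hP.isUnit_sub hS (by rw [range_orthProj, range_orthProj]; exact h.symm)
  have hunit : ∀ Q : H →L[ℂ] H, IsOrthProjection Q →
      IsCompl (LinearMap.range (Q : H →ₗ[ℂ] H)) Z → IsUnit (Q - orthProj Z hZ) :=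
    fun Q hQ hQZ => hQ.isStarProjection.isUnit_sub hP (by rwa [range_orthProj])
  refine ⟨fun Q hQ hQZ => ?_, continuous_iff_continuousAt.2 fun Q =>
    (continuousAt_crossSection (hunit Q Q.2.1 Q.2.2)).comp continuous_subtype_val.continuousAt⟩
  have hQ' := hQ.isStarProjection.isIdempotentElem
  have hP' := hP.isIdempotentElem
  have hS' := hS.isIdempotentElem
  have hQP := hunit Q hQ hQZ
  refine ⟨hPS, hQP, neg_sub (orthProj Z hZ) _ ▸ hPS.neg,
    isUnit_crossSection hP' hS' hQ' hPS hQP, ?_, ?_⟩ <;> rw [sigmaOp_eq_crossSection]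
  · have hfix := crossSection_mul_fst hP' hS' hQ' hPS hQP
    simpa only [range_orthProj] using ContinuousLinearMap.map_range_eq_range_of_mul_eq 1 1
      (hfix.trans (mul_one _).symm) ((mul_one _).trans hfix)
  · simpa only [range_orthProj] using ContinuousLinearMap.map_range_eq_range_of_mul_eq _ _
      (crossSection_mul_snd hP' hS' hQ' hPS hQP) (crossSection_mul_snd_mul hP' hS' hQ' hPS hQP)
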